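/- Given two spinors z, z̃ ∈ ℂ² with equal nonzero norms ⟨z|z⟩ = ⟨z̃|z̃⟩ > 0, the matrix g = (|z̃⟩⟨z| + |z̃][z|) / sqrt(⟨z|z⟩⟨z̃|z̃⟩) is an element of SU(2), and it satisfies g|z⟩ = |z̃⟩ and g|z] = |z̃]. -/

import Mathlib

open ComplexConjugate

/-- The Hermitian inner product `⟨w|z⟩`. -/
def herm (w z : Fin 2 → ℂ) : ℂ := conj (w 0) * z 0 + conj (w 1) * z 1

/-- The dual spinor `ς z = (-conj z¹, conj z⁰)`. -/
def dualSpinor (z : Fin 2 → ℂ) : Fin 2 → ℂ := ![-(conj (z 1)), conj (z 0)]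

/-- The outer product `|a⟩⟨b|` with entries `a_A conj(b_B)`. -/
def outerP (a b : Fin 2 → ℂ) : Matrix (Fin 2) (Fin 2) ℂ :=
  Matrix.of fun A B => a A * conj (b B)

/-!
The matrix `F z` with columns `|z⟩` and `|z]` satisfies `F zᴴ F z = F z F zᴴ = ⟨z|z⟩ • 1` and
`det (F z) = ⟨z|z⟩`, and `|z̃⟩⟨z| + |z̃][z| = F z̃ * F zᴴ`. With `r = ⟨z|z⟩ = ⟨z̃|z̃⟩` the matrix
`g = r⁻¹ • F z̃ * F zᴴ` is therefore unitary of determinant `r⁻² r r = 1`, and `g * F z = F z̃`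
says exactly that `g` maps the columns `|z⟩, |z]` to `|z̃⟩, |z̃]`.
-/

open Matrix

def spinorFrame (z : Fin 2 → ℂ) : Matrix (Fin 2) (Fin 2) ℂ :=
  Matrix.of fun A j => ![z, dualSpinor z] j A

lemma star_herm_self (z : Fin 2 → ℂ) : star (herm z z) = herm z z := by
  simp only [herm, star_add, star_mul', Complex.star_def, Complex.conj_conj]
  ring

lemma ofReal_re_herm_self (z : Fin 2 → ℂ) : ((herm z z).re : ℂ) = herm z z :=
  Complex.conj_eq_iff_re.mp (star_herm_self z)

lemma spinorFrame_col_zero (z : Fin 2 → ℂ) : (spinorFrame z).col 0 = z := by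
  ext A; simp [spinorFrame]

lemma spinorFrame_col_one (z : Fin 2 → ℂ) : (spinorFrame z).col 1 = dualSpinor z := by
  ext A; simp [spinorFrame]

lemma conjTranspose_spinorFrame_mul_self (z : Fin 2 → ℂ) :
    (spinorFrame z)ᴴ * spinorFrame z = herm z z • 1 := by
  ext i j
  fin_cases i <;> fin_cases j <;>
    simp [spinorFrame, dualSpinor, herm, Matrix.mul_apply, Fin.sum_univ_two] <;> ring

lemma spinorFrame_mul_conjTranspose_self (z : Fin 2 → ℂ) :
    spinorFrame z * (spinorFrame z)ᴴ = herm z z • 1 := by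
  ext i j
  fin_cases i <;> fin_cases j <;>
    simp [spinorFrame, dualSpinor, herm, Matrix.mul_apply, Fin.sum_univ_two] <;> ring

lemma det_spinorFrame (z : Fin 2 → ℂ) : (spinorFrame z).det = herm z z := by
  simp only [det_fin_two, spinorFrame, dualSpinor, herm, of_apply, cons_val', cons_val_zero,
    cons_val_one, cons_val_fin_one]
  ring

lemma outerP_add_outerP_dualSpinor (w z : Fin 2 → ℂ) :
    outerP w z + outerP (dualSpinor w) (dualSpinor z) = spinorFrame w * (spinorFrame z)ᴴ := by
  ext i j
  fin_cases i <;> fin_cases j <;> simp [outerP, spinorFrame, Matrix.mul_apply, Fin.sum_univ_two]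

noncomputable def spinorTransport (z w : Fin 2 → ℂ) : Matrix (Fin 2) (Fin 2) ℂ :=
  (herm z z)⁻¹ • (spinorFrame w * (spinorFrame z)ᴴ)

section spinorTransport

variable {z w : Fin 2 → ℂ}

lemma spinorTransport_mul_spinorFrame (hz : herm z z ≠ 0) :
    spinorTransport z w * spinorFrame z = spinorFrame w := by
  rw [spinorTransport, smul_mul, Matrix.mul_assoc, conjTranspose_spinorFrame_mul_self,
    Matrix.mul_smul, Matrix.mul_one, smul_smul, inv_mul_cancel₀ hz, one_smul]

lemma spinorTransport_mul_conjTranspose (hzw : herm z z = herm w w) (hz : herm z z ≠ 0) :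
    spinorTransport z w * (spinorTransport z w)ᴴ = 1 := by
  have hstar : star (herm z z)⁻¹ = (herm z z)⁻¹ := by rw [star_inv₀, star_herm_self]
  calc spinorTransport z w * (spinorTransport z w)ᴴ
      = ((herm z z)⁻¹ * (herm z z)⁻¹) •
          (spinorFrame w * ((spinorFrame z)ᴴ * spinorFrame z) * (spinorFrame w)ᴴ) := by
        simp only [spinorTransport, conjTranspose_smul, conjTranspose_mul,
          conjTranspose_conjTranspose, hstar, smul_mul, Matrix.mul_smul, smul_smul,
          Matrix.mul_assoc]
    _ = ((herm z z)⁻¹ * (herm z z)⁻¹ * herm z z * herm z z) • 1 := by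
        rw [conjTranspose_spinorFrame_mul_self, Matrix.mul_smul, Matrix.mul_one, smul_mul,
          spinorFrame_mul_conjTranspose_self, ← hzw, smul_smul, smul_smul]
    _ = 1 := by rw [inv_mul_cancel_right₀ hz, inv_mul_cancel₀ hz, one_smul]

lemma det_spinorTransport (hzw : herm z z = herm w w) (hz : herm z z ≠ 0) :
    (spinorTransport z w).det = 1 := by
  rw [spinorTransport, det_smul, det_mul, det_conjTranspose, det_spinorFrame, det_spinorFrame,
    star_herm_self, ← hzw, Fintype.card_fin]
  field_simp

lemma mulVec_eq_of_mul_spinorFrame {g : Matrix (Fin 2) (Fin 2) ℂ}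
    (hg : g * spinorFrame z = spinorFrame w) :
    g *ᵥ z = w ∧ g *ᵥ dualSpinor z = dualSpinor w := by
  constructor
  · rw [← spinorFrame_col_zero z, ← mulVec_single_one, mulVec_mulVec, hg, mulVec_single_one,
      spinorFrame_col_zero]
  · rw [← spinorFrame_col_one z, ← mulVec_single_one, mulVec_mulVec, hg, mulVec_single_one,
      spinorFrame_col_one]

end spinorTransport

/-- if `⟨z|z⟩ = ⟨z̃|z̃⟩ > 0`, then
`g = (|z̃⟩⟨z| + |z̃][z|)/√(⟨z|z⟩⟨z̃|z̃⟩)` is in SU(2) and maps `z ↦ z̃`, `|z] ↦ |z̃]`. -/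
theorem su2_from_spinor_pair (z zt : Fin 2 → ℂ)
    (hnorm : herm z z = herm zt zt) (hpos : 0 < (herm z z).re) :
    let g : Matrix (Fin 2) (Fin 2) ℂ :=
      ((Real.sqrt ((herm z z).re * (herm zt zt).re) : ℂ))⁻¹ •
        (outerP zt z + outerP (dualSpinor zt) (dualSpinor z))
    g * g.conjTranspose = 1 ∧ g.conjTranspose * g = 1 ∧ g.det = 1 ∧
      g.mulVec z = zt ∧ g.mulVec (dualSpinor z) = dualSpinor zt := by
  have hz : herm z z ≠ 0 := fun h => hpos.ne' (by simp [h])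
  have hsqrt : Real.sqrt ((herm z z).re * (herm zt zt).re) = (herm z z).re := by
    rw [← hnorm, Real.sqrt_mul_self hpos.le]
  intro g
  have hg : g = spinorTransport z zt := by
    simp only [g, hsqrt, ofReal_re_herm_self, outerP_add_outerP_dualSpinor, spinorTransport]
  have hunitary := spinorTransport_mul_conjTranspose hnorm hz
  obtain ⟨hmap, hmapDual⟩ := mulVec_eq_of_mul_spinorFrame (spinorTransport_mul_spinorFrame hz)
  rw [hg]
  exact ⟨hunitary, mul_eq_one_comm.mp hunitary, det_spinorTransport hnorm hz, hmap, hmapDual⟩
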